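/- Let L₁, …, L_m be finite lattices. An element (x₁, …, x_m) of the product lattice L₁ × ⋯ × L_m is an Eeta win if and only if x_i is an Eeta win in L_i for every i ∈ [m]. Equivalently, E(L₁ × ⋯ × L_m) = E(L₁) × ⋯ × E(L_m). -/

import Mathlib

variable {L : Type*} [PartialOrder L]

/-- `ung x` is the set `{⋀({x} ∪ T) : T ⊆ cov x}` of results of Ungar moves applied to `x`. -/
def ung (x : L) : Set L :=
  {y | ∃ T : Set L, (∀ t ∈ T, t ⋖ x) ∧ IsGLB (insert x T) y}

lemma ung_le {x y : L} (h : y ∈ ung x) : y ≤ x := by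
  obtain ⟨T, -, hglb⟩ := h
  exact hglb.1 (Set.mem_insert x T)

attribute [local instance] WellFoundedLT.toWellFoundedRelation

mutual
  /-- `x` is an Atniss win: some element of `ung x \ {x}` is an Eeta win. -/
  def atnissWin [WellFoundedLT L] (x : L) : Prop :=
    ∃ y, ∃ _ : y ∈ ung x ∧ y ≠ x, eetaWin y
  termination_by x
  decreasing_by rename_i h; exact lt_of_le_of_ne (ung_le h.1) h.2

  /-- `x` is an Eeta win: every element of `ung x \ {x}` is an Atniss win. -/
  def eetaWin [WellFoundedLT L] (x : L) : Prop :=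
    ∀ y, (y ∈ ung x ∧ y ≠ x) → atnissWin y
  termination_by x
  decreasing_by rename_i h; exact lt_of_le_of_ne (ung_le h.1) h.2
end


lemma atnissWin_iff [WellFoundedLT L] (x : L) :
    atnissWin x ↔ ∃ y, (y ∈ ung x ∧ y ≠ x) ∧ eetaWin y := by
  rw [atnissWin]
  exact ⟨fun ⟨y, h, he⟩ => ⟨y, h, he⟩, fun ⟨y, h, he⟩ => ⟨y, h, he⟩⟩

lemma eetaWin_iff [WellFoundedLT L] (x : L) :
    eetaWin x ↔ ∀ y, (y ∈ ung x ∧ y ≠ x) → atnissWin y := by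
  rw [eetaWin]

lemma mem_ung_self (x : L) : x ∈ ung x :=
  ⟨∅, by simp, by simpa using isGLB_singleton⟩

lemma atnissWin_iff_not_eetaWin [WellFoundedLT L] (x : L) :
    atnissWin x ↔ ¬ eetaWin x := by
  refine WellFoundedLT.induction (motive := fun x => atnissWin x ↔ ¬ eetaWin x) x ?_
  intro x IH
  rw [atnissWin_iff, eetaWin_iff]
  push_neg
  constructor
  · rintro ⟨y, hy, he⟩
    refine ⟨y, hy, ?_⟩
    have hlt : y < x := lt_of_le_of_ne (ung_le hy.1) hy.2
    exact fun ha => ((IH y hlt).mp ha) he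
  · rintro ⟨y, hy, hna⟩
    have hlt : y < x := lt_of_le_of_ne (ung_le hy.1) hy.2
    exact ⟨y, hy, by_contra fun h => hna ((IH y hlt).mpr h)⟩

section Pi

variable {m : ℕ} {P : Fin m → Type*} [∀ i, PartialOrder (P i)]

lemma covBy_apply {t x : ∀ i, P i} (h : t ⋖ x) {i : Fin m} (hne : t i ≠ x i) : t i ⋖ x i := by
  constructor
  · exact lt_of_le_of_ne (h.1.le i) hne
  · intro c h1 h2
    have ht1 : t < Function.update t i c := by
      refine lt_of_le_of_ne (fun j => ?_) (fun he => h1.ne ?_)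
      · rcases eq_or_ne j i with rfl | hj
        · simpa using h1.le
        · simp [Function.update_of_ne hj]
      · simpa using congrFun he i
    have ht2 : Function.update t i c < x := by
      refine lt_of_le_of_ne (fun j => ?_) (fun he => h2.ne ?_)
      · rcases eq_or_ne j i with rfl | hj
        · simpa using h2.le
        · simpa [Function.update_of_ne hj] using h.1.le j
      · simpa using congrFun he i
    exact h.2 ht1 ht2

lemma update_covBy {x : ∀ i, P i} {i : Fin m} {t : P i} (h : t ⋖ x i) :
    Function.update x i t ⋖ x := by
  constructor
  · refine lt_of_le_of_ne (fun j => ?_) (fun he => h.ne ?_)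
    · rcases eq_or_ne j i with rfl | hj
      · simpa using h.le
      · simp [Function.update_of_ne hj]
    · simpa using congrFun he i
  · intro c h1 h2
    have hci : t ≤ c i := by simpa using h1.le i
    rcases eq_or_lt_of_le hci with heq | hlt
    · refine h1.ne (funext fun j => ?_)
      rcases eq_or_ne j i with rfl | hj
      · simpa using heq
      · simp only [Function.update_of_ne hj]
        exact le_antisymm (by simpa [Function.update_of_ne hj] using h1.le j) (h2.le j)
    · refine h.2 hlt (lt_of_le_of_ne (h2.le i) fun heq => h2.ne (funext fun j => ?_))
      rcases eq_or_ne j i with rfl | hj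
      · exact heq
      · exact le_antisymm (h2.le j) (by simpa [Function.update_of_ne hj] using h1.le j)

lemma mem_ung_pi_iff (x y : ∀ i, P i) : y ∈ ung x ↔ ∀ i, y i ∈ ung (x i) := by
  constructor
  · rintro ⟨T, hT, hglb⟩ i
    refine ⟨Function.eval i '' T \ {x i}, ?_, ?_⟩
    · rintro t ⟨⟨s, hs, rfl⟩, hne⟩
      exact covBy_apply (hT s hs) (by simpa using hne)
    · have h := (isGLB_pi.mp hglb) i
      rw [Set.image_insert_eq] at h
      rwa [Set.insert_diff_singleton]
  · intro h
    choose T hc hg using h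
    refine ⟨⋃ i, (fun t => Function.update x i t) '' T i, ?_, ?_⟩
    · rintro t ht
      simp only [Set.mem_iUnion, Set.mem_image] at ht
      obtain ⟨i, s, hs, rfl⟩ := ht
      exact update_covBy (hc i s hs)
    · rw [isGLB_pi]
      intro i
      have hset : Function.eval i '' insert x (⋃ j, (fun t => Function.update x j t) '' T j) =
          insert (x i) (T i) := by
        apply Set.Subset.antisymm
        · rintro e ⟨s, hs, rfl⟩
          rcases Set.mem_insert_iff.mp hs with rfl | hs
          · exact Set.mem_insert _ _
          · simp only [Set.mem_iUnion, Set.mem_image] at hs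
            obtain ⟨j, t, ht, rfl⟩ := hs
            rcases eq_or_ne j i with rfl | hji
            · exact Set.mem_insert_iff.mpr (Or.inr (by simpa using ht))
            · have : Function.update x j t i = x i := Function.update_of_ne (Ne.symm hji) _ _
              rw [show Function.eval i (Function.update x j t) = Function.update x j t i from rfl,
                this]
              exact Set.mem_insert _ _
        · rintro e he
          rcases Set.mem_insert_iff.mp he with rfl | hT
          · exact ⟨x, Set.mem_insert _ _, rfl⟩
          · exact ⟨Function.update x i e,
              Set.mem_insert_of_mem _ (Set.mem_iUnion.mpr ⟨i, Set.mem_image_of_mem _ hT⟩),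
              by simp⟩
      rw [hset]
      exact hg i

end Pi

lemma key_pi {m : ℕ} (P : Fin m → Type*) [∀ i, Lattice (P i)] [∀ i, Finite (P i)]
    (x : ∀ i, P i) :
    ((∀ i, eetaWin (x i)) → eetaWin x) ∧ ((∃ i, atnissWin (x i)) → atnissWin x) := by
  refine WellFoundedLT.induction
    (motive := fun x => ((∀ i, eetaWin (x i)) → eetaWin x) ∧ ((∃ i, atnissWin (x i)) → atnissWin x))
    x ?_
  intro x IH
  constructor
  · intro h
    rw [eetaWin_iff]
    rintro y ⟨hy, hne⟩
    have hlt : y < x := lt_of_le_of_ne (ung_le hy) hne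
    obtain ⟨i, hi⟩ : ∃ i, y i ≠ x i := by
      by_contra hc; push_neg at hc; exact hne (funext hc)
    have hyi : y i ∈ ung (x i) := (mem_ung_pi_iff x y).mp hy i
    exact (IH y hlt).2 ⟨i, (eetaWin_iff (x i)).mp (h i) (y i) ⟨hyi, hi⟩⟩
  · rintro ⟨i0, hi0⟩
    have hz : ∀ i, ∃ z, z ∈ ung (x i) ∧ eetaWin z ∧ (atnissWin (x i) → z ≠ x i) := by
      intro i
      by_cases he : eetaWin (x i)
      · exact ⟨x i, mem_ung_self _, he,
          fun ha => absurd he ((atnissWin_iff_not_eetaWin _).mp ha)⟩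
      · obtain ⟨z, hzc, hze⟩ := (atnissWin_iff _).mp ((atnissWin_iff_not_eetaWin _).mpr he)
        exact ⟨z, hzc.1, hze, fun _ => hzc.2⟩
    choose y hmem heeta hne using hz
    have hyx : y ≠ x := fun h => (hne i0 hi0) (congrFun h i0)
    have hymem : y ∈ ung x := (mem_ung_pi_iff x y).mpr hmem
    have hlt : y < x := lt_of_le_of_ne (ung_le hymem) hyx
    rw [atnissWin_iff]
    exact ⟨y, ⟨hymem, hyx⟩, (IH y hlt).1 heeta⟩

/-- An element of a finite product of finite lattices is an Eeta win if and only if each of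
its coordinates is an Eeta win in its lattice. -/
theorem eetaWin_pi_iff {m : ℕ} (L : Fin m → Type*) [∀ i, Lattice (L i)] [∀ i, Finite (L i)]
    (x : ∀ i, L i) : eetaWin x ↔ ∀ i, eetaWin (x i) := by
  constructor
  · intro he
    by_contra hc
    push_neg at hc
    obtain ⟨i, hi⟩ := hc
    exact (atnissWin_iff_not_eetaWin x).mp
      ((key_pi L x).2 ⟨i, (atnissWin_iff_not_eetaWin _).mpr hi⟩) he
  · exact (key_pi L x).1
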